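/- Let Ω be a Lipschitz domain in ℝ^N (N ≥ 1), p ∈ [1, ∞), and let v ∈ W^{1,p}(Ω). Then for any measurable u, v with gradients in L^p, the quasi-norm inequality ∫_Ω (|Du| + |Dv|)^{p−2} |D(u−v)|² dx ≥ ‖D(u−v)‖²_{L^p(Ω)} / (‖Du‖_{L^p(Ω)} + ‖Dv‖_{L^p(Ω)})^{2−p} holds when 1 < p ≤ 2 (with the conventions that the left side is +∞ or the inequality trivially holds if the denominator vanishes). -/

import Mathlib

open Real MeasureTheory ENNReal

/-- Barrett–Liu quasi-norm comparison: for `1 < p ≤ 2`, a measurable `Ω ⊆ ℝ^N` and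
`u, v` with gradients in `L^p(Ω)`,
`∫_Ω (|Du|+|Dv|)^{p−2}|D(u−v)|² ≥ ‖D(u−v)‖²_{L^p(Ω)} / (‖Du‖_{L^p(Ω)}+‖Dv‖_{L^p(Ω)})^{2−p}`
(formulated with extended-nonnegative-real integrals so that degenerate cases hold by
convention). -/
theorem stmt_15 (N : ℕ) (hN : 1 ≤ N) (p : ℝ) (hp1 : 1 < p) (hp2 : p ≤ 2)
    (Ω : Set (EuclideanSpace ℝ (Fin N))) (hΩ : MeasurableSet Ω)
    (u v : EuclideanSpace ℝ (Fin N) → ℝ)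
    (hu : MemLp (fun x => gradient u x) (ENNReal.ofReal p) (volume.restrict Ω))
    (hv : MemLp (fun x => gradient v x) (ENNReal.ofReal p) (volume.restrict Ω)) :
    (∫⁻ x in Ω, ENNReal.ofReal (‖gradient u x - gradient v x‖ ^ p)) ^ ((2 : ℝ) / p) /
        (((∫⁻ x in Ω, ENNReal.ofReal (‖gradient u x‖ ^ p)) ^ (1 / p) +
            (∫⁻ x in Ω, ENNReal.ofReal (‖gradient v x‖ ^ p)) ^ (1 / p)) ^ (2 - p)) ≤
      ∫⁻ x in Ω, ENNReal.ofReal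
        ((‖gradient u x‖ + ‖gradient v x‖) ^ (p - 2) *
          ‖gradient u x - gradient v x‖ ^ 2) := by
  set μ := volume.restrict Ω
  have hp0 : (0:ℝ) < p := by linarith
  have ha : AEMeasurable (fun x => ‖gradient u x‖) μ := hu.1.norm.aemeasurable
  have hb : AEMeasurable (fun x => ‖gradient v x‖) μ := hv.1.norm.aemeasurable
  have hc : AEMeasurable (fun x => ‖gradient u x - gradient v x‖) μ :=
    (hu.1.sub hv.1).norm.aemeasurable
  -- abbreviations
  set a : EuclideanSpace ℝ (Fin N) → ℝ := fun x => ‖gradient u x‖ with ha_def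
  set b : EuclideanSpace ℝ (Fin N) → ℝ := fun x => ‖gradient v x‖ with hb_def
  set c : EuclideanSpace ℝ (Fin N) → ℝ := fun x => ‖gradient u x - gradient v x‖ with hc_def
  have ha0 : ∀ x, 0 ≤ a x := fun x => norm_nonneg _
  have hb0 : ∀ x, 0 ≤ b x := fun x => norm_nonneg _
  have hc0 : ∀ x, 0 ≤ c x := fun x => norm_nonneg _
  have hcab : ∀ x, c x ≤ a x + b x := fun x => norm_sub_le _ _
  set I : ℝ≥0∞ := ∫⁻ x in Ω, ENNReal.ofReal ((a x + b x) ^ (p - 2) * c x ^ 2) with hI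
  set K : ℝ≥0∞ := ∫⁻ x in Ω, ENNReal.ofReal (c x ^ p) with hK
  set D : ℝ≥0∞ := (∫⁻ x in Ω, ENNReal.ofReal (a x ^ p)) ^ (1 / p) +
      (∫⁻ x in Ω, ENNReal.ofReal (b x ^ p)) ^ (1 / p) with hD
  set J : ℝ≥0∞ := ∫⁻ x in Ω, ENNReal.ofReal ((a x + b x) ^ p) with hJ
  -- Minkowski: J^(1/p) ≤ D
  have hJD : J ^ (1 / p) ≤ D := by
    have heq : ∀ x, ENNReal.ofReal ((a x + b x) ^ p)
        = ((fun x => ENNReal.ofReal (a x)) + (fun x => ENNReal.ofReal (b x))) x ^ p := by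
      intro x
      rw [Pi.add_apply, ← ENNReal.ofReal_add (ha0 x) (hb0 x),
        ENNReal.ofReal_rpow_of_nonneg (by positivity) hp0.le]
    have h1 : ∀ x, ENNReal.ofReal (a x ^ p) = ENNReal.ofReal (a x) ^ p := fun x =>
      (ENNReal.ofReal_rpow_of_nonneg (ha0 x) hp0.le).symm
    have h2 : ∀ x, ENNReal.ofReal (b x ^ p) = ENNReal.ofReal (b x) ^ p := fun x =>
      (ENNReal.ofReal_rpow_of_nonneg (hb0 x) hp0.le).symm
    calc J ^ (1 / p) = (∫⁻ x in Ω, ((fun x => ENNReal.ofReal (a x))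
          + (fun x => ENNReal.ofReal (b x))) x ^ p ∂volume) ^ (1 / p) := by
            rw [hJ]; simp_rw [heq]
      _ ≤ (∫⁻ x in Ω, ENNReal.ofReal (a x) ^ p) ^ (1 / p)
          + (∫⁻ x in Ω, ENNReal.ofReal (b x) ^ p) ^ (1 / p) :=
            ENNReal.lintegral_Lp_add_le ha.ennreal_ofReal hb.ennreal_ofReal hp1.le
      _ = D := by rw [hD]; simp_rw [h1, h2]
  rcases eq_or_lt_of_le hp2 with hp2' | hp2'
  · -- p = 2 : both sides equal
    subst hp2'
    have : ∀ x, ENNReal.ofReal ((a x + b x) ^ ((2:ℝ) - 2) * c x ^ 2)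
        = ENNReal.ofReal (c x ^ (2:ℝ)) := by
      intro x
      rw [sub_self, Real.rpow_zero, one_mul, ← Real.rpow_natCast (c x) 2]
      norm_num
    rw [hI]
    simp_rw [this]
    rw [sub_self, ENNReal.rpow_zero, div_one]
    have : (2:ℝ) / 2 = 1 := by norm_num
    rw [this, ENNReal.rpow_one]
  · -- 1 < p < 2 : Hölder
    have h2p : (0:ℝ) < 2 - p := by linarith
    have hpq : ((2:ℝ)/p).HolderConjugate (2/(2-p)) := by
      rw [Real.holderConjugate_iff]; constructor
      · rw [lt_div_iff₀ hp0]; linarith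
      · rw [inv_div, inv_div]; ring
    set F : EuclideanSpace ℝ (Fin N) → ℝ≥0∞ :=
      fun x => ENNReal.ofReal ((a x + b x) ^ (p - 2) * c x ^ 2) ^ (p / 2) with hF
    set G : EuclideanSpace ℝ (Fin N) → ℝ≥0∞ :=
      fun x => ENNReal.ofReal ((a x + b x) ^ p) ^ ((2 - p) / 2) with hG
    have hFmeas : AEMeasurable F μ := by
      apply AEMeasurable.pow_const
      apply AEMeasurable.ennreal_ofReal
      exact (((ha.add hb).pow aemeasurable_const).mul (hc.pow aemeasurable_const))
    have hGmeas : AEMeasurable G μ := by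
      apply AEMeasurable.pow_const
      apply AEMeasurable.ennreal_ofReal
      exact (ha.add hb).pow aemeasurable_const
    -- pointwise bound
    have hpt : ∀ x, ENNReal.ofReal (c x ^ p) ≤ F x * G x := by
      intro x
      have hA0 : 0 ≤ a x + b x := by positivity
      simp only [hF, hG]
      rw [ENNReal.ofReal_rpow_of_nonneg (by positivity) (by linarith : (0:ℝ) ≤ p/2),
        ENNReal.ofReal_rpow_of_nonneg (by positivity) (by linarith : (0:ℝ) ≤ (2-p)/2),
        ← ENNReal.ofReal_mul (by positivity)]
      apply ENNReal.ofReal_le_ofReal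
      rcases eq_or_lt_of_le hA0 with hA | hA
      · -- a+b = 0 so c = 0
        have hcx : c x = 0 := le_antisymm (by rw [hA]; exact hcab x) (hc0 x)
        rw [hcx, Real.zero_rpow hp0.ne']
        positivity
      · -- a + b > 0
        have hc2 : c x ^ 2 = c x ^ (2:ℝ) := by
          rw [← Real.rpow_natCast (c x) 2]; norm_num
        rw [hc2, Real.mul_rpow (Real.rpow_nonneg hA0 _) (Real.rpow_nonneg (hc0 x) _),
          ← Real.rpow_mul hA0, ← Real.rpow_mul (hc0 x), ← Real.rpow_mul hA0,
          show (2:ℝ) * (p/2) = p by ring, mul_right_comm, ← Real.rpow_add hA,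
          show (p - 2) * (p / 2) + p * ((2 - p)/2) = 0 by ring, Real.rpow_zero, one_mul]
    -- Hölder
    have hHold : K ≤ I ^ (p/2) * J ^ ((2-p)/2) := by
      have h := ENNReal.lintegral_mul_le_Lp_mul_Lq μ hpq hFmeas hGmeas
      have hFq : ∀ x, F x ^ ((2:ℝ)/p) = ENNReal.ofReal ((a x + b x) ^ (p - 2) * c x ^ 2) := by
        intro x
        rw [hF, ← ENNReal.rpow_mul]
        have : (p/2) * (2/p) = 1 := by field_simp
        rw [this, ENNReal.rpow_one]
      have hGq : ∀ x, G x ^ ((2:ℝ)/(2-p)) = ENNReal.ofReal ((a x + b x) ^ p) := by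
        intro x
        rw [hG, ← ENNReal.rpow_mul]
        have : ((2-p)/2) * (2/(2-p)) = 1 := by field_simp
        rw [this, ENNReal.rpow_one]
      calc K ≤ ∫⁻ x, F x * G x ∂μ := lintegral_mono fun x => hpt x
        _ ≤ (∫⁻ x, F x ^ ((2:ℝ)/p) ∂μ) ^ (1/((2:ℝ)/p))
            * (∫⁻ x, G x ^ ((2:ℝ)/(2-p)) ∂μ) ^ (1/((2:ℝ)/(2-p))) := h
        _ = I ^ (p/2) * J ^ ((2-p)/2) := by
            simp_rw [hFq, hGq, one_div_div]; rfl
    -- raise to 2/p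
    have hmain : K ^ ((2:ℝ)/p) ≤ I * J ^ ((2-p)/p) := by
      calc K ^ ((2:ℝ)/p) ≤ (I ^ (p/2) * J ^ ((2-p)/2)) ^ ((2:ℝ)/p) :=
            ENNReal.rpow_le_rpow hHold (by positivity)
        _ = I * J ^ ((2-p)/p) := by
            rw [ENNReal.mul_rpow_of_nonneg _ _ (by positivity), ← ENNReal.rpow_mul,
              ← ENNReal.rpow_mul]
            congr 1
            · rw [show (p/2) * (2/p) = 1 by field_simp, ENNReal.rpow_one]
            · congr 1; field_simp
    have hJD2 : J ^ ((2-p)/p) ≤ D ^ (2 - p) := by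
      have : J ^ ((2-p)/p) = (J ^ (1/p)) ^ (2-p) := by
        rw [← ENNReal.rpow_mul]; congr 1; ring
      rw [this]
      exact ENNReal.rpow_le_rpow hJD h2p.le
    refine ENNReal.div_le_of_le_mul ?_
    calc K ^ ((2:ℝ)/p) ≤ I * J ^ ((2-p)/p) := hmain
      _ ≤ I * D ^ (2 - p) := mul_le_mul_right hJD2 _
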